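/- For any nonempty quasi-order (Q,≤_Q), if Q is a well-quasi-order, then the quasi-order (T_f(Q), ≤_T) of finite leaf-labelled trees over Q ordered by tree homomorphisms is also a well-quasi-order. -/

import Mathlib

universe u v

open Ordinal

/-- A quasi-order: a reflexive transitive binary relation. -/
def IsQO {Q : Type u} (le : Q → Q → Prop) : Prop :=
  Reflexive le ∧ Transitive le

/-- A well-quasi-order: a quasi-order in which every infinite sequence of elements
contains a weakly increasing pair. -/
def IsWQO {Q : Type u} (le : Q → Q → Prop) : Prop :=
  IsQO le ∧ ∀ f : ℕ → Q, ∃ i j : ℕ, i < j ∧ le (f i) (f j)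

/-- Finite leaf-labelled trees over `Q`: leaves carry labels from `Q`, and an internal
node carries a finite nonempty list of children (encoded as a head child plus the list
of remaining children). -/
inductive LTree (Q : Type u) : Type u
  | leaf : Q → LTree Q
  | node : LTree Q → List (LTree Q) → LTree Q

mutual
/-- The tree-homomorphism quasi-order `≤_T` on finite leaf-labelled trees:
`·x ≤_T ·y` iff `le x y`; `·x ≤_T ·(τ₀,…,τ_{l-1})` iff `·x ≤_T τ_j` for some `j < l`;
`·(σ₀,…,σ_{k-1}) ≤_T ·(τ₀,…,τ_{l-1})` iff for every `i < k` there is `j < l` with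
`σᵢ ≤_T τ_j`; and `·(σ₀,…,σ_{k-1}) ≤_T ·y` never holds. -/
inductive TreeLE {Q : Type u} (le : Q → Q → Prop) : LTree Q → LTree Q → Prop
  | leaf {x y : Q} : le x y → TreeLE le (.leaf x) (.leaf y)
  | leafNode {x : Q} {t : LTree Q} {ts : List (LTree Q)} :
      TreeMemLE le (.leaf x) (t :: ts) → TreeLE le (.leaf x) (.node t ts)
  | node {s t : LTree Q} {ss ts : List (LTree Q)} :
      TreeAllLE le (s :: ss) (t :: ts) → TreeLE le (.node s ss) (.node t ts)

/-- `TreeMemLE le a l` means `∃ b ∈ l, TreeLE le a b`. -/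
inductive TreeMemLE {Q : Type u} (le : Q → Q → Prop) : LTree Q → List (LTree Q) → Prop
  | head {a b : LTree Q} {l : List (LTree Q)} : TreeLE le a b → TreeMemLE le a (b :: l)
  | tail {a b : LTree Q} {l : List (LTree Q)} : TreeMemLE le a l → TreeMemLE le a (b :: l)

/-- `TreeAllLE le l₁ l₂` means `∀ a ∈ l₁, ∃ b ∈ l₂, TreeLE le a b`. -/
inductive TreeAllLE {Q : Type u} (le : Q → Q → Prop) : List (LTree Q) → List (LTree Q) → Prop
  | nil {l : List (LTree Q)} : TreeAllLE le [] l
  | cons {a : LTree Q} {l₁ l₂ : List (LTree Q)} :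
      TreeMemLE le a l₂ → TreeAllLE le l₁ l₂ → TreeAllLE le (a :: l₁) l₂
end

/-!
Nash-Williams' minimal bad sequence argument. If `≤_T` were not a wqo, pick a bad sequence
`f` whose terms are as small as possible, position by position. Only finitely many `f n` are
leaves, since `Q` is a wqo. The children of all the `f n` form a wqo set: a bad sequence of
children could be spliced into `f` to give a smaller bad sequence. By Higman's lemma the
children lists of the remaining `f n` then contain an embedded pair, and such an embedding
yields `f i ≤_T f j` with `i < j`.
-/

namespace Set.PartiallyWellOrderedOn

/-- If `g` were bad on this set, with `g k` below `f (idx k)` and `idx k` least, then splicing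
`f` (before `idx k`) with the tail of `g` (from `k` on) would be a bad sequence that undercuts `f`
at position `idx k`. -/
theorem setOf_sub_of_isMinBadSeq {α : Type*} {r : α → α → Prop} [IsTrans α r] {rk : α → ℕ}
    {sub : α → α → Prop} (sub_rk : ∀ ⦃a b⦄, sub a b → rk a < rk b)
    (sub_r : ∀ ⦃a b⦄, sub a b → r a b) {f : ℕ → α} (hf : IsBadSeq r univ f)
    (hmin : ∀ n, IsMinBadSeq r rk univ n f) :
    {a | ∃ n, sub a (f n)}.PartiallyWellOrderedOn r := by
  rw [iff_forall_not_isBadSeq]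
  rintro g ⟨hg, hbad⟩
  choose idx hidx using hg
  set k := Function.argmin idx
  have hk : ∀ i, idx k ≤ idx i := fun i => Function.argmin_le idx i
  set h : ℕ → α := fun p => if p < idx k then f p else g (k + (p - idx k))
  refine hmin (idx k) h (fun m hm => (if_pos hm).symm) ?_ ⟨fun _ => trivial, ?_⟩
  · simpa [h] using sub_rk (hidx k)
  intro p q hpq hr
  by_cases hq : q < idx k
  · simp only [h, if_pos (hpq.trans hq), if_pos hq] at hr
    exact hf.2 p q hpq hr
  by_cases hp : p < idx k
  · simp only [h, if_pos hp, if_neg hq] at hr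
    set i := k + (q - idx k)
    exact hf.2 p (idx i) (hp.trans_le (hk i)) (_root_.trans hr (sub_r (hidx i)))
  · simp only [h, if_neg hp, if_neg hq] at hr
    exact hbad _ _ (by omega) hr

end Set.PartiallyWellOrderedOn

theorem List.SublistForall₂.forall_exists_rel {α β : Type*} {R : α → β → Prop} {l₁ : List α}
    {l₂ : List β} (h : List.SublistForall₂ R l₁ l₂) : ∀ a ∈ l₁, ∃ b ∈ l₂, R a b := by
  induction h with
  | nil => simp
  | @cons _ b _ _ hab _ ih =>
    rintro c (_ | ⟨_, hc⟩)
    · exact ⟨b, List.mem_cons_self, hab⟩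
    · obtain ⟨d, hd, hcd⟩ := ih c hc
      exact ⟨d, List.mem_cons_of_mem _ hd, hcd⟩
  | cons_right _ ih =>
    intro c hc
    obtain ⟨d, hd, hcd⟩ := ih c hc
    exact ⟨d, List.mem_cons_of_mem _ hd, hcd⟩

namespace LTree

def children {Q : Type u} : LTree Q → List (LTree Q)
  | .leaf _ => []
  | .node t ts => t :: ts

theorem sizeOf_lt_of_mem_children {Q : Type u} {s t : LTree Q} (h : s ∈ t.children) :
    sizeOf s < sizeOf t := by
  cases t with
  | leaf x => simp [children] at h
  | node u us =>
    have := List.sizeOf_lt_of_mem h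
    simp only [children, node.sizeOf_spec, List.cons.sizeOf_spec] at this ⊢
    omega

end LTree

open LTree

section TreeLE

variable {Q : Type u} {le : Q → Q → Prop}

theorem treeMemLE_iff {a : LTree Q} {l : List (LTree Q)} :
    TreeMemLE le a l ↔ ∃ b ∈ l, TreeLE le a b := by
  induction l with
  | nil => simp only [List.not_mem_nil, false_and, exists_false, iff_false]; rintro ⟨⟩
  | cons b l ih =>
    simp only [List.mem_cons, or_and_right, exists_or, exists_eq_left, ← ih]
    constructor
    · rintro (h | h)
      exacts [.inl h, .inr h]
    · rintro (h | h)
      exacts [.head h, .tail h]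

theorem treeAllLE_iff {l₁ l₂ : List (LTree Q)} :
    TreeAllLE le l₁ l₂ ↔ ∀ a ∈ l₁, ∃ b ∈ l₂, TreeLE le a b := by
  induction l₁ with
  | nil => simpa using TreeAllLE.nil
  | cons a l₁ ih =>
    rw [List.forall_mem_cons, ← ih, ← treeMemLE_iff]
    constructor
    · rintro ⟨⟩
      constructor <;> assumption
    · rintro ⟨h, hs⟩
      exact .cons h hs

theorem treeLE_leaf_node_iff {x : Q} {t : LTree Q} {ts : List (LTree Q)} :
    TreeLE le (.leaf x) (.node t ts) ↔ ∃ b ∈ t :: ts, TreeLE le (.leaf x) b := by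
  rw [← treeMemLE_iff]
  constructor
  · rintro ⟨⟩
    assumption
  · exact .leafNode

theorem treeLE_node_node_iff {s t : LTree Q} {ss ts : List (LTree Q)} :
    TreeLE le (.node s ss) (.node t ts) ↔ ∀ a ∈ s :: ss, ∃ b ∈ t :: ts, TreeLE le a b := by
  rw [← treeAllLE_iff]
  constructor
  · rintro ⟨⟩
    assumption
  · exact .node

theorem treeLE_refl (hr : ∀ x, le x x) : ∀ t : LTree Q, TreeLE le t t
  | .leaf x => .leaf (hr x)
  | .node t ts => treeLE_node_node_iff.2 fun a ha => ⟨a, ha, treeLE_refl hr a⟩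
termination_by t => t
decreasing_by exact sizeOf_lt_of_mem_children ha

theorem treeLE_trans (ht : ∀ ⦃x y z⦄, le x y → le y z → le x z) :
    ∀ {a b c : LTree Q}, TreeLE le a b → TreeLE le b c → TreeLE le a c
  | _, _, _, .leaf hab, .leaf hbc => .leaf (ht hab hbc)
  | _, _, .node t ts, .leaf hab, .leafNode hbc => by
    obtain ⟨d, hd, hbd⟩ := treeMemLE_iff.1 hbc
    exact treeLE_leaf_node_iff.2 ⟨d, hd, treeLE_trans ht (.leaf hab) hbd⟩
  | _, _, .node t ts, .leafNode hab, .node hbc => by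
    obtain ⟨d, hd, had⟩ := treeMemLE_iff.1 hab
    obtain ⟨e, he, hde⟩ := treeAllLE_iff.1 hbc d hd
    exact treeLE_leaf_node_iff.2 ⟨e, he, treeLE_trans ht had hde⟩
  | _, _, .node t ts, .node hab, .node hbc => by
    refine treeLE_node_node_iff.2 fun a ha => ?_
    obtain ⟨d, hd, had⟩ := treeAllLE_iff.1 hab a ha
    obtain ⟨e, he, hde⟩ := treeAllLE_iff.1 hbc d hd
    exact ⟨e, he, treeLE_trans ht had hde⟩
termination_by _ _ c => c
decreasing_by all_goals exact sizeOf_lt_of_mem_children ‹_›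

theorem isQO_treeLE (h : IsQO le) : IsQO (TreeLE le) :=
  ⟨treeLE_refl h.1, fun _ _ _ => treeLE_trans h.2⟩

theorem treeLE_of_mem_children (hr : ∀ x, le x x) :
    ∀ {s t : LTree Q}, s ∈ t.children → TreeLE le s t
  | .leaf x, .node _ _, hs => treeLE_leaf_node_iff.2 ⟨_, hs, .leaf (hr x)⟩
  | .node _ _, .node _ _, hs =>
    treeLE_node_node_iff.2 fun _ ha => ⟨_, hs, treeLE_of_mem_children hr ha⟩
termination_by s => s
decreasing_by exact sizeOf_lt_of_mem_children ha

theorem treeLE_of_sublistForall₂_children {s t : LTree Q} (hs : s ∉ Set.range leaf)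
    (ht : t ∉ Set.range leaf) (h : List.SublistForall₂ (TreeLE le) s.children t.children) :
    TreeLE le s t := by
  cases s with
  | leaf x => exact absurd ⟨x, rfl⟩ hs
  | node s ss =>
    cases t with
    | leaf y => exact absurd ⟨y, rfl⟩ ht
    | node t ts => exact treeLE_node_node_iff.2 h.forall_exists_rel

theorem exists_notMem_range_leaf_of_isBadSeq (hwqo : WellQuasiOrdered le) {f : ℕ → LTree Q}
    (hf : Set.PartiallyWellOrderedOn.IsBadSeq (TreeLE le) Set.univ f) :
    ∃ N, ∀ n, N < n → f n ∉ Set.range leaf := by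
  have hleaves : (Set.range (leaf : Q → LTree Q)).PartiallyWellOrderedOn (TreeLE le) := by
    rw [← Set.image_univ]
    exact (Set.partiallyWellOrderedOn_univ_iff.2 hwqo).image_of_monotone_on
      fun _ _ _ _ h => .leaf h
  exact hleaves.exists_notMem_of_gt hf.2

end TreeLE

/-- For any nonempty quasi-order `(Q, ≤_Q)`, if `Q` is a well-quasi-order, then the
quasi-order `(T_f(Q), ≤_T)` of finite leaf-labelled trees over `Q` ordered by tree
homomorphisms is also a well-quasi-order. -/
theorem isWQO_treeLE {Q : Type u} [Nonempty Q]
    (le : Q → Q → Prop) (hwqo : IsWQO le) :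
    IsWQO (TreeLE le) := by
  obtain ⟨hqo, hseq⟩ := hwqo
  have hTqo := isQO_treeLE hqo
  have : IsPreorder (LTree Q) (TreeLE le) := { refl := hTqo.1, trans := hTqo.2 }
  refine ⟨hTqo, ?_⟩
  change WellQuasiOrdered (TreeLE le)
  rw [← Set.partiallyWellOrderedOn_univ_iff,
    Set.PartiallyWellOrderedOn.iff_not_exists_isMinBadSeq sizeOf]
  rintro ⟨f, hf, hmin⟩
  obtain ⟨N, hN⟩ := exists_notMem_range_leaf_of_isBadSeq hseq hf
  have hchildren := Set.PartiallyWellOrderedOn.setOf_sub_of_isMinBadSeq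
    (sub := fun s t => s ∈ t.children) (fun _ _ => sizeOf_lt_of_mem_children)
    (fun _ _ => treeLE_of_mem_children hqo.1) hf hmin
  obtain ⟨i, j, hij, h⟩ := (hchildren.partiallyWellOrderedOn_sublistForall₂ (TreeLE le)).exists_lt
    (f := fun n => (f (N + 1 + n)).children) fun _ _ ha => ⟨_, ha⟩
  exact hf.2 _ _ (by omega)
    (treeLE_of_sublistForall₂_children (hN _ (by omega)) (hN _ (by omega)) h)
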